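/- (Valley-filling) Let ĥ in N^T be sorted in non-increasing order and τ a nonnegative integer. Define v = min{ x in N : Σ_{j=1}^T [x − ĥ_j]^+ ≥ τ }, and let h̃ be obtained from ĥ by first replacing every entry less than v by v, and then decreasing each of the last (Σ_{j=1}^T [v − ĥ_j]^+ − τ) entries by one. Then h̃ is majorized by ĥ + b for every b in N^T with ||b||_1 = τ. -/

import Mathlib

/-!
Majorization of integer vectors is tested by thresholds: if `∑ [x j - t]⁺ ≤ ∑ [y j - t]⁺` for every
`t`, then every top-`k` sum of `x` is at most the corresponding one of `y`, because any `k` entries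
of `x` sum to at most `k t + ∑ [x j - t]⁺`, with equality for `y` when `t` separates its `k` largest
entries from the rest. The valley-filled vector `h̃` has the same total as `ĥ + b` (this is where
the minimality of `v` enters: it gives `∑ [v - ĥ j]⁺ - τ ≤ T`), and it lies between `v - 1` and
`max (ĥ + b) v` entrywise. Above level `v` the threshold sums of `h̃` are dominated pointwise;
below it every entry of `h̃` clears the threshold, so equal totals give the inequality.
-/

/-- Sum of the `k` largest entries of `x` (padding with zeros if `k` exceeds the length). -/
def topSum {N : ℕ} (x : Fin N → ℕ) (k : ℕ) : ℕ :=
  (Finset.univ.powerset.filter (fun S : Finset (Fin N) => S.card ≤ k)).sup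
    (fun S => ∑ i ∈ S, x i)

open Finset

theorem Finset.exists_subset_card_eq_and_forall_sdiff_le {α β : Type*} [DecidableEq α]
    [AddCommMonoid β] [LinearOrder β] [IsOrderedCancelAddMonoid β]
    (s : Finset α) (f : α → β) {k : ℕ} (hk : k ≤ s.card) :
    ∃ t ⊆ s, t.card = k ∧ ∀ i ∈ t, ∀ j ∈ s \ t, f j ≤ f i := by
  obtain ⟨t, ht, hmax⟩ := (s.powersetCard k).exists_max_image (fun t => ∑ i ∈ t, f i)
    (powersetCard_nonempty.mpr hk)
  rw [mem_powersetCard] at ht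
  refine ⟨t, ht.1, ht.2, fun i hi j hj => ?_⟩
  rw [mem_sdiff] at hj
  by_contra! hlt
  have hj_erase : j ∉ t.erase i := fun h => hj.2 (mem_of_mem_erase h)
  have hswap : insert j (t.erase i) ∈ s.powersetCard k := by
    have : 0 < k := ht.2 ▸ card_pos.mpr ⟨i, hi⟩
    rw [mem_powersetCard, card_insert_of_notMem hj_erase, card_erase_of_mem hi, ht.2]
    exact ⟨insert_subset hj.1 ((erase_subset _ _).trans ht.1), by omega⟩
  have hle := hmax _ hswap
  rw [sum_insert hj_erase, ← add_sum_erase t f hi] at hle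
  exact (add_lt_add_left hlt _).not_ge hle

section Threshold

variable {α : Type*} [Fintype α]

theorem sum_le_card_mul_add_sum_tsub (x : α → ℕ) (S : Finset α) (t : ℕ) :
    ∑ i ∈ S, x i ≤ S.card * t + ∑ j, (x j - t) :=
  calc ∑ i ∈ S, x i ≤ ∑ i ∈ S, (t + (x i - t)) := sum_le_sum fun i _ => le_add_tsub
    _ = S.card * t + ∑ i ∈ S, (x i - t) := by rw [sum_add_distrib, sum_const, smul_eq_mul]
    _ ≤ S.card * t + ∑ j, (x j - t) := by gcongr; exact subset_univ S

theorem sum_eq_card_mul_add_sum_tsub (y : α → ℕ) (S : Finset α) (t : ℕ)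
    (hS : ∀ i ∈ S, t ≤ y i) (hSc : ∀ j ∉ S, y j ≤ t) :
    ∑ i ∈ S, y i = S.card * t + ∑ j, (y j - t) := by
  classical
  have hout : ∑ j ∈ univ \ S, (y j - t) = 0 :=
    sum_eq_zero fun j hj => Nat.sub_eq_zero_of_le (hSc j (mem_sdiff.mp hj).2)
  rw [← sum_sdiff (subset_univ S), hout, zero_add, ← smul_eq_mul, ← sum_const, ← sum_add_distrib]
  exact sum_congr rfl fun i hi => (add_tsub_cancel_of_le (hS i hi)).symm

theorem sum_tsub_le_sum_tsub_of_le_max {x y : α → ℕ} {v : ℕ} (hx_le : ∀ j, x j ≤ max (y j) v)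
    (hx_ge : ∀ j, v - 1 ≤ x j) (hsum : ∑ j, x j = ∑ j, y j) (t : ℕ) :
    ∑ j, (x j - t) ≤ ∑ j, (y j - t) := by
  by_cases hvt : v ≤ t
  · exact sum_le_sum fun j _ => by have := hx_le j; omega
  have hx_sum : ∑ j, (x j - t) + ∑ _j : α, t = ∑ j, x j := by
    rw [← sum_add_distrib]
    exact sum_congr rfl fun j _ => tsub_add_cancel_of_le (by have := hx_ge j; omega)
  have hy_sum : ∑ j, y j ≤ ∑ j, (y j - t) + ∑ _j : α, t := by
    rw [← sum_add_distrib]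
    exact sum_le_sum fun j _ => le_tsub_add
  omega

theorem sum_tsub_le_add_card_of_isLeast (h : α → ℕ) {τ v : ℕ}
    (hv : IsLeast {x | τ ≤ ∑ j, (x - h j)} v) : ∑ j, (v - h j) ≤ τ + Fintype.card α := by
  rcases Nat.eq_zero_or_pos v with rfl | hv0
  · simp
  have hpred : ∑ j, (v - 1 - h j) < τ := by
    by_contra! hle
    exact absurd (hv.2 hle) (by omega)
  have hstep : ∑ j, (v - h j) ≤ ∑ j, (v - 1 - h j + 1) := sum_le_sum fun j _ => by omega
  rw [sum_add_distrib, sum_const, card_univ, smul_eq_mul, mul_one] at hstep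
  omega

end Threshold

section TopSum

variable {N : ℕ}

theorem sum_le_topSum (x : Fin N → ℕ) {k : ℕ} {S : Finset (Fin N)} (hS : S.card ≤ k) :
    ∑ i ∈ S, x i ≤ topSum x k :=
  le_sup (f := fun S => ∑ i ∈ S, x i) (mem_filter.mpr ⟨mem_powerset.mpr (subset_univ S), hS⟩)

theorem topSum_le_topSum_of_sum_tsub_le {x y : Fin N → ℕ}
    (h : ∀ t, ∑ j, (x j - t) ≤ ∑ j, (y j - t)) (k : ℕ) : topSum x k ≤ topSum y k := by
  obtain ⟨R, -, hR_card, hR_top⟩ := univ.exists_subset_card_eq_and_forall_sdiff_le y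
    (k := min k N) (by simp)
  set t := (univ \ R).sup y
  have hR_sum : ∑ i ∈ R, y i = R.card * t + ∑ j, (y j - t) :=
    sum_eq_card_mul_add_sum_tsub y R t (fun i hi => Finset.sup_le fun j hj => hR_top i hi j hj)
      (fun j hj => le_sup (mem_sdiff.mpr ⟨mem_univ j, hj⟩))
  refine Finset.sup_le fun S hS => ?_
  have hSR : S.card ≤ R.card := by
    rw [hR_card]
    exact le_min (mem_filter.mp hS).2 (card_le_univ S |>.trans_eq (Fintype.card_fin N))
  calc ∑ i ∈ S, x i ≤ S.card * t + ∑ j, (x j - t) := sum_le_card_mul_add_sum_tsub x S t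
    _ ≤ R.card * t + ∑ j, (y j - t) := add_le_add (by gcongr) (h t)
    _ = ∑ i ∈ R, y i := hR_sum.symm
    _ ≤ topSum y k := sum_le_topSum y (hR_card ▸ min_le_left k N)

end TopSum

theorem sum_valley_fill {T : ℕ} (hhat : Fin T → ℕ) {τ v s : ℕ}
    (hv : IsLeast {x : ℕ | τ ≤ ∑ j, (x - hhat j)} v) (hs : s = (∑ j, (v - hhat j)) - τ)
    (htil : Fin T → ℕ)
    (hdef : ∀ j : Fin T, htil j = max (hhat j) v - (if T - s ≤ (j : ℕ) then 1 else 0)) :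
    ∑ j, htil j = ∑ j, hhat j + τ := by
  have hsT : s ≤ T := by
    have := sum_tsub_le_add_card_of_isLeast hhat hv
    rw [Fintype.card_fin] at this
    omega
  have hcount : ∑ j : Fin T, (if T - s ≤ (j : ℕ) then 1 else 0) = s := by
    rw [sum_boole, Nat.cast_id]
    simp only [← not_lt, filter_not, card_sdiff_of_subset (filter_subset _ _), card_univ,
      Fintype.card_fin, Fin.card_filter_val_lt]
    omega
  -- the `- 1` never truncates: either `s = 0` or every entry is raised to at least `v ≥ 1`
  have hv0 : v = 0 → s = 0 := by rintro rfl; simp [hs]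
  have hpt : ∀ j : Fin T,
      htil j + (if T - s ≤ (j : ℕ) then 1 else 0) = hhat j + (v - hhat j) := fun j => by
    have := j.isLt
    rw [hdef j]; split_ifs <;> omega
  have htotal := sum_congr rfl fun j (_ : j ∈ univ) => hpt j
  rw [sum_add_distrib, sum_add_distrib, hcount] at htotal
  have hτ : τ ≤ ∑ j, (v - hhat j) := hv.1
  omega

theorem valley_filling_general (T : ℕ) (hhat : Fin T → ℕ) (τ : ℕ)
    (v : ℕ) (hv : IsLeast {x : ℕ | τ ≤ ∑ j, (x - hhat j)} v)
    (s : ℕ) (hs : s = (∑ j, (v - hhat j)) - τ)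
    (htil : Fin T → ℕ)
    (hdef : ∀ j : Fin T, htil j = max (hhat j) v - (if T - s ≤ (j : ℕ) then 1 else 0))
    (b : Fin T → ℕ) (hb : ∑ j, b j = τ) :
    (∀ k, topSum htil k ≤ topSum (fun j => hhat j + b j) k) ∧
      (∑ j, htil j = ∑ j, (hhat j + b j)) := by
  have hsum : ∑ j, htil j = ∑ j, (hhat j + b j) := by
    rw [sum_valley_fill hhat hv hs htil hdef, sum_add_distrib, hb]
  have hle : ∀ j, htil j ≤ max (hhat j + b j) v := fun j => by
    rw [hdef j]; omega
  have hge : ∀ j, v - 1 ≤ htil j := fun j => by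
    rw [hdef j]; split_ifs <;> omega
  exact ⟨topSum_le_topSum_of_sum_tsub_le (sum_tsub_le_sum_tsub_of_le_max hle hge hsum), hsum⟩

/-- Valley-filling: the vector `htil`, obtained from the non-increasing vector `hhat` by
raising all entries below the minimal level `v` (at which `∑ [v - hhat j]⁺ ≥ τ`) up to `v`
and then decreasing each of the last `∑ [v - hhat j]⁺ - τ` entries by one, is majorized by
`hhat + b` for every nonnegative integer vector `b` with `‖b‖₁ = τ`. -/
theorem valley_filling (T : ℕ) (hhat : Fin T → ℕ) (hanti : Antitone hhat) (τ : ℕ)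
    (v : ℕ) (hv : IsLeast {x : ℕ | τ ≤ ∑ j, (x - hhat j)} v)
    (s : ℕ) (hs : s = (∑ j, (v - hhat j)) - τ)
    (htil : Fin T → ℕ)
    (hdef : ∀ j : Fin T, htil j = max (hhat j) v - (if T - s ≤ (j : ℕ) then 1 else 0))
    (b : Fin T → ℕ) (hb : ∑ j, b j = τ) :
    (∀ k, topSum htil k ≤ topSum (fun j => hhat j + b j) k) ∧
      (∑ j, htil j = ∑ j, (hhat j + b j)) :=
  valley_filling_general T hhat τ v hv s hs htil hdef b hb
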